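/- Any sequence of edge flips transforming a triangulation G on n vertices into the canonical triangulation Δₙ (with designated dominant vertices a and b) has length at least 2n - 2Δ(G) - 3, where Δ(G) is the maximum degree of G. -/

import Mathlib

open Finset

/-- An abstract combinatorial planar triangulation: a simple graph together with its
set of (triangular) faces, such that every face is a 3-clique, every edge lies on
exactly two faces, every vertex lies on a face, and Euler's relation holds. -/
structure Triangulation (V : Type*) [Fintype V] [DecidableEq V] where
  graph : SimpleGraph V
  faces : Finset (Finset V)
  face_card : ∀ f ∈ faces, f.card = 3
  face_clique : ∀ f ∈ faces, ∀ u ∈ f, ∀ v ∈ f, u ≠ v → graph.Adj u v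
  edge_faces : ∀ u v : V, graph.Adj u v → (faces.filter fun f => u ∈ f ∧ v ∈ f).card = 2
  vertex_face : ∀ v : V, ∃ f ∈ faces, v ∈ f
  euler : faces.card = 2 * Fintype.card V - 4

variable {V : Type*} [Fintype V] [DecidableEq V]

/-- Degree of a vertex. -/
noncomputable def deg (G : SimpleGraph V) (v : V) : ℕ := (G.neighborSet v).ncard

/-- A vertex adjacent to all other vertices. -/
def Dominant (G : SimpleGraph V) (v : V) : Prop := ∀ u, u ≠ v → G.Adj v u

/-- A triangle (3-cycle) of a graph. -/
def IsTriangle (G : SimpleGraph V) (t : Finset V) : Prop :=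
  t.card = 3 ∧ ∀ u ∈ t, ∀ v ∈ t, u ≠ v → G.Adj u v

/-- A separating triangle: a 3-cycle of the triangulation that is not a face. -/
def IsSepTri (T : Triangulation V) (t : Finset V) : Prop :=
  IsTriangle T.graph t ∧ t ∉ T.faces

/-- Flipping the edge `uv`, shared by the faces `uvx` and `uvy`, into the edge `xy`.
The flip is valid only when `xy` is not already an edge. -/
def FlipEdge (T T' : Triangulation V) (u v x y : V) : Prop :=
  ({u, v, x} : Finset V) ∈ T.faces ∧ ({u, v, y} : Finset V) ∈ T.faces ∧ x ≠ y ∧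
    ¬ T.graph.Adj x y ∧
    T'.graph = SimpleGraph.fromEdgeSet ((T.graph.edgeSet \ {s(u, v)}) ∪ {s(x, y)}) ∧
    T'.faces =
      insert {u, x, y} (insert {v, x, y} ((T.faces.erase {u, v, x}).erase {u, v, y}))

/-- One triangulation is obtained from another by a single edge flip. -/
def IsFlip (T T' : Triangulation V) : Prop := ∃ u v x y, FlipEdge T T' u v x y

/-- `T'` is reachable from `T` by a sequence of exactly `k` edge flips. -/
def ReachableIn (T T' : Triangulation V) (k : ℕ) : Prop :=
  ∃ L : List (Triangulation V), L.length = k ∧ List.Chain IsFlip T L ∧ L.getLastD T = T'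

/-! The proof follows the number of edges incident to `a` or `b`. In `T` it is at most
`deg a + deg b ≤ 2Δ(T)`. A flip removes one edge and adds one, so it raises this count by at most
one. In the target, where `a` and `b` are dominant, the count is `2(n - 1) - 1 = 2n - 3`, the edge
`ab` being counted once. -/

theorem List.IsChain.apply_getLastD_le_add_length {α : Type*} {R : α → α → Prop}
    {f : α → ℕ} (hf : ∀ x y, R x y → f y ≤ f x + 1) :
    ∀ {a : α} {L : List α}, List.IsChain R (a :: L) → f (L.getLastD a) ≤ f a + L.length
  | _, [], _ => by simp
  | a, b :: L, h => by
    rw [List.isChain_cons_cons] at h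
    have hstep := hf a b h.1
    have hrest := apply_getLastD_le_add_length hf h.2
    simp only [List.getLastD_cons, List.length_cons]
    omega

namespace SimpleGraph

variable {W : Type*} {G G' : SimpleGraph W}

theorem ncard_incidenceSet (G : SimpleGraph W) (v : W) :
    (G.incidenceSet v).ncard = (G.neighborSet v).ncard := by
  classical exact Set.ncard_congr' (G.incidenceSetEquivNeighborSet v)

theorem ncard_incidenceSet_union_le_of_edgeSet_subset_insert [Finite W] {e : Sym2 W}
    (h : G'.edgeSet ⊆ insert e G.edgeSet) (a b : W) :
    (G'.incidenceSet a ∪ G'.incidenceSet b).ncard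
      ≤ (G.incidenceSet a ∪ G.incidenceSet b).ncard + 1 := by
  have hsub : G'.incidenceSet a ∪ G'.incidenceSet b
      ⊆ insert e (G.incidenceSet a ∪ G.incidenceSet b) := by
    rintro f (⟨hf, hfa⟩ | ⟨hf, hfb⟩) <;> rcases h hf with rfl | hf
    exacts [.inl rfl, .inr (.inl ⟨hf, hfa⟩), .inl rfl, .inr (.inr ⟨hf, hfb⟩)]
  exact (Set.ncard_le_ncard hsub (Set.toFinite _)).trans (Set.ncard_insert_le _ _)

theorem ncard_incidenceSet_union_le (G : SimpleGraph W) (a b : W) :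
    (G.incidenceSet a ∪ G.incidenceSet b).ncard
      ≤ (G.neighborSet a).ncard + (G.neighborSet b).ncard := by
  rw [← G.ncard_incidenceSet, ← G.ncard_incidenceSet]
  exact Set.ncard_union_le _ _

theorem ncard_neighborSet_add_ncard_neighborSet_le [Finite W] (G : SimpleGraph W) {a b : W}
    (hab : a ≠ b) :
    (G.neighborSet a).ncard + (G.neighborSet b).ncard
      ≤ (G.incidenceSet a ∪ G.incidenceSet b).ncard + 1 := by
  have hinter : (G.incidenceSet a ∩ G.incidenceSet b).ncard ≤ 1 :=
    (Set.ncard_le_ncard (G.incidenceSet_inter_incidenceSet_subset hab)).trans_eq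
      (Set.ncard_singleton _)
  rw [← G.ncard_incidenceSet, ← G.ncard_incidenceSet,
    ← Set.ncard_union_add_ncard_inter _ _ (Set.toFinite _) (Set.toFinite _)]
  omega

end SimpleGraph

theorem Dominant.ncard_neighborSet {W : Type*} [Fintype W] {G : SimpleGraph W} {a : W}
    (h : Dominant G a) :
    (G.neighborSet a).ncard = Fintype.card W - 1 := by
  have hneighbors : G.neighborSet a = {a}ᶜ := by
    ext u
    exact ⟨fun hu => hu.ne', h u⟩
  rw [hneighbors, Set.ncard_compl, Set.ncard_singleton, Nat.card_eq_fintype_card]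

theorem IsFlip.edgeSet_subset_insert {T T' : Triangulation V} (h : IsFlip T T') :
    ∃ e, T'.graph.edgeSet ⊆ insert e T.graph.edgeSet := by
  obtain ⟨u, v, x, y, -, -, -, -, hgraph, -⟩ := h
  refine ⟨s(x, y), ?_⟩
  rw [hgraph, SimpleGraph.edgeSet_fromEdgeSet]
  rintro f ⟨hf | hf, -⟩
  · exact Or.inr hf.1
  · exact Or.inl hf

theorem IsFlip.ncard_incidenceSet_union_le {T T' : Triangulation V} (h : IsFlip T T') (a b : V) :
    (T'.graph.incidenceSet a ∪ T'.graph.incidenceSet b).ncard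
      ≤ (T.graph.incidenceSet a ∪ T.graph.incidenceSet b).ncard + 1 :=
  let ⟨_, he⟩ := h.edgeSet_subset_insert
  SimpleGraph.ncard_incidenceSet_union_le_of_edgeSet_subset_insert he a b

/-- Any sequence of edge flips transforming a triangulation `T` on `n` vertices into
the canonical triangulation (one with two distinct dominant vertices) has length at
least `2n - 2Δ(T) - 3`, where `Δ(T)` is the maximum degree of `T`. -/
theorem flips_to_canonical_lower_bound (T : Triangulation V) (k : ℕ)
    (h : ∃ T' : Triangulation V, ReachableIn T T' k ∧
        ∃ a b : V, a ≠ b ∧ Dominant T'.graph a ∧ Dominant T'.graph b) :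
    2 * (Fintype.card V : ℤ)
        - 2 * (((Finset.univ.sup fun v => deg T.graph v) : ℕ) : ℤ) - 3
      ≤ (k : ℤ) := by
  obtain ⟨-, ⟨L, rfl, hchain, rfl⟩, a, b, hab, ha, hb⟩ := h
  let edgesAtAB (S : Triangulation V) := (S.graph.incidenceSet a ∪ S.graph.incidenceSet b).ncard
  have hflips : edgesAtAB (L.getLastD T) ≤ edgesAtAB T + L.length :=
    List.IsChain.apply_getLastD_le_add_length
      (fun _ _ hflip => hflip.ncard_incidenceSet_union_le a b) hchain
  have hstart : edgesAtAB T ≤ deg T.graph a + deg T.graph b :=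
    T.graph.ncard_incidenceSet_union_le a b
  have hend : 2 * (Fintype.card V - 1) ≤ edgesAtAB (L.getLastD T) + 1 := by
    have hcount := (L.getLastD T).graph.ncard_neighborSet_add_ncard_neighborSet_le hab
    rwa [Dominant.ncard_neighborSet ha, Dominant.ncard_neighborSet hb, ← two_mul] at hcount
  have hΔa : deg T.graph a ≤ univ.sup fun v => deg T.graph v := le_sup (mem_univ a)
  have hΔb : deg T.graph b ≤ univ.sup fun v => deg T.graph v := le_sup (mem_univ b)
  have hcard : 0 < Fintype.card V := Fintype.card_pos_iff.2 ⟨a⟩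
  omega
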